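/- arXiv:1210.5061 — 10 statements merged into one kernel-verified Lean document; each statement's English description precedes it below -/
import Mathlib

section
/- For an n×n matrix A over an arbitrary (possibly noncommutative) ring R with 1, the symmetric determinant sdet(A) = Σ_{α,β ∈ S_n} sgn(α)sgn(β) a_{α(1),β(1)} ⋯ a_{α(n),β(n)} equals the trace of A·A*, where A* is the preadjoint matrix whose (r,s) entry is Σ sgn(α)sgn(β) a_{α(1),β(1)} ⋯ a_{α(s-1),β(s-1)} a_{α(s+1),β(s+1)} ⋯ a_{α(n),β(n)}, the sum over all α,β ∈ S_n with α(s)=s and β(s)=r. -/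
open Matrix Polynomial

/-- The symmetric determinant of a square matrix over a possibly noncommutative ring:
`sdet A = Σ_{α,β ∈ S_n} sgn α · sgn β · a_{α 1, β 1} ⋯ a_{α n, β n}` (ordered product). -/
def sdet {R : Type*} [Ring R] {n : ℕ} (A : Matrix (Fin n) (Fin n) R) : R :=
  ∑ α : Equiv.Perm (Fin n), ∑ β : Equiv.Perm (Fin n),
    ((Equiv.Perm.sign α : ℤ) * (Equiv.Perm.sign β : ℤ)) •
      (List.ofFn fun i : Fin n => A (α i) (β i)).prod

/-- The preadjoint matrix `A*`: its `(r,s)` entry is the sum over `α, β ∈ S_n`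
with `α s = s` and `β s = r` of `sgn α · sgn β` times the ordered product of the
entries `a_{α i, β i}` for `i ≠ s`. -/
def preadj {R : Type*} [Ring R] {n : ℕ} (A : Matrix (Fin n) (Fin n) R) :
    Matrix (Fin n) (Fin n) R :=
  fun r s =>
    ∑ α ∈ Finset.univ.filter (fun α : Equiv.Perm (Fin n) => α s = s),
      ∑ β ∈ Finset.univ.filter (fun β : Equiv.Perm (Fin n) => β s = r),
        ((Equiv.Perm.sign α : ℤ) * (Equiv.Perm.sign β : ℤ)) •
          (((List.finRange n).filter (fun i => i ≠ s)).map fun i => A (α i) (β i)).prod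

/-!
Expanding `(A * A*) k k = Σ_s a_{k,s} a*_{s,k}` merges the sum over `s` with the constraint
`β k = s`, giving the signed sum over `α, β` with `α k = k` of `a_{k,β k}` times the ordered
product of the remaining factors. Precomposing `α` and `β` with `(cycleRange k)⁻¹`, which sends
`0 ↦ k` and enumerates the other indices in increasing order, preserves `sgn α · sgn β` and
turns this into the part of `sdet A` with `α 0 = k`. Summing over `k` gives `sdet A`.
-/

open Equiv Finset

theorem List.filter_finRange_ne_eq_ofFn_succAbove {m : ℕ} (k : Fin (m + 1)) :
    (List.finRange (m + 1)).filter (fun i => i ≠ k) = List.ofFn k.succAbove := by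
  induction m with
  | zero => rw [Fin.fin_one_eq_zero k]; rfl
  | succ m ih =>
    rw [List.finRange_succ, List.filter_cons, List.filter_map]
    cases k using Fin.cases with
    | zero =>
      rw [if_neg (by simp), List.filter_eq_self.2 (by simp [Fin.succ_ne_zero]),
        Fin.succAbove_zero, List.ofFn_eq_map]
    | succ j =>
      simp only [ne_eq, decide_not] at ih
      simp [Function.comp_def, List.ofFn_succ, ih, (Fin.succ_ne_zero j).symm, List.map_ofFn]

theorem List.prod_ofFn_cycleRange_symm {M : Type*} [Monoid M] {m : ℕ} (g : Fin (m + 1) → M)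
    (k : Fin (m + 1)) :
    (List.ofFn fun i => g (k.cycleRange.symm i)).prod
      = g k * (((List.finRange (m + 1)).filter (fun i => i ≠ k)).map g).prod := by
  rw [List.filter_finRange_ne_eq_ofFn_succAbove, List.ofFn_succ, List.prod_cons, List.map_ofFn]
  simp [Fin.cycleRange_symm_succ, Function.comp_def]

theorem Equiv.Perm.sign_mul_right_mul_sign_mul_right {ι : Type*} [DecidableEq ι] [Fintype ι]
    (σ τ ρ : Perm ι) :
    (Perm.sign (σ * ρ) : ℤ) * Perm.sign (τ * ρ) = Perm.sign σ * Perm.sign τ := by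
  rw [← Units.val_mul, ← Units.val_mul, map_mul, map_mul, mul_mul_mul_comm, Int.units_mul_self,
    mul_one]

section

variable {R : Type*} [Ring R]

theorem mul_preadj_apply_self {n : ℕ} (A : Matrix (Fin n) (Fin n) R) (k : Fin n) :
    (A * preadj A) k k = ∑ α ∈ univ.filter (fun α : Perm (Fin n) => α k = k),
      ∑ β : Perm (Fin n), ((Perm.sign α : ℤ) * Perm.sign β) •
        (A k (β k) * (((List.finRange n).filter (fun i => i ≠ k)).map
          fun i => A (α i) (β i)).prod) := by
  simp only [mul_apply, preadj, mul_sum, mul_smul_comm]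
  rw [sum_comm]
  refine sum_congr rfl fun α _ => ?_
  rw [← sum_fiberwise univ (fun β : Perm (Fin n) => β k)]
  refine sum_congr rfl fun s _ => sum_congr rfl fun β hβ => ?_
  rw [(mem_filter.1 hβ).2]

theorem mul_preadj_apply_self_eq_sum_apply_zero_eq {m : ℕ}
    (A : Matrix (Fin (m + 1)) (Fin (m + 1)) R) (k : Fin (m + 1)) :
    (A * preadj A) k k = ∑ α ∈ univ.filter (fun α : Perm (Fin (m + 1)) => α 0 = k),
      ∑ β : Perm (Fin (m + 1)),
        ((Perm.sign α : ℤ) * Perm.sign β) • (List.ofFn fun i => A (α i) (β i)).prod := by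
  rw [mul_preadj_apply_self]
  refine sum_equiv (Equiv.mulRight k.cycleRange.symm) (fun α => ?_) fun α hα => ?_
  · simp [Fin.cycleRange_symm_zero]
  refine Fintype.sum_equiv (Equiv.mulRight k.cycleRange.symm) _ _ fun β => ?_
  simp only [Equiv.coe_mulRight, Perm.sign_mul_right_mul_sign_mul_right, Perm.mul_apply]
  rw [List.prod_ofFn_cycleRange_symm (fun j => A (α j) (β j)), (mem_filter.1 hα).2]

end

theorem sdet_eq_trace_mul_preadj {R : Type*} [Ring R] {n : ℕ} (hn : 0 < n)
    (A : Matrix (Fin n) (Fin n) R) :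
    sdet A = Matrix.trace (A * preadj A) := by
  obtain ⟨m, rfl⟩ : ∃ m, n = m + 1 := ⟨n - 1, by omega⟩
  simp only [trace, diag_apply, mul_preadj_apply_self_eq_sum_apply_zero_eq, sdet]
  exact (sum_fiberwise univ (fun α : Perm (Fin (m + 1)) => α 0) _).symm
end

section
/- For an n×n matrix A over an arbitrary ring R with 1, tr(A·A*) = tr(A*·A), where A* is the preadjoint matrix; equivalently, the first right determinant equals the first left determinant (both equal sdet(A)). -/
open Matrix Polynomial

/-!
Expanding the diagonal entries, `tr (A A*)` and `tr (A* A)` are both sums, over `k` and over pairs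
`(α, β)` with `α k = k`, of signed ordered products `a_{α i, β i}` taken along an ordering of the
indices that puts `k` first, respectively last. Such an ordering is the image of the standard one
under a permutation `σ_k` sending a fixed position (`0`, resp. the last one) to `k`; substituting
`(α σ_k, β σ_k)` for `(α, β)` turns the `k`-th block into the part of `sdet A` with `α 0 = k`
(resp. `α last = k`), so both traces equal `sdet A`.
-/

open Equiv Finset

lemma List.filter_ne_finRange {m : ℕ} (k : Fin (m + 1)) :
    (List.finRange (m + 1)).filter (fun i => i ≠ k) = (List.finRange m).map k.succAbove := by
  refine ((List.pairwise_lt_finRange _).filter _).eq_of_mem_iff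
    (List.pairwise_map.mpr ((List.pairwise_lt_finRange m).imp fun h => Fin.strictMono_succAbove k h))
    fun i => ?_
  simp [Fin.exists_succAbove_eq_iff]

lemma List.cons_filter_ne_finRange {m : ℕ} (k : Fin (m + 1)) :
    k :: (List.finRange (m + 1)).filter (fun i => i ≠ k)
      = (List.finRange (m + 1)).map k.cycleRange.symm := by
  rw [List.filter_ne_finRange, List.finRange_succ]
  simp [Function.comp_def]

lemma List.filter_ne_finRange_append {m : ℕ} (k : Fin (m + 1)) :
    (List.finRange (m + 1)).filter (fun i => i ≠ k) ++ [k]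
      = (List.finRange (m + 1)).map (k.cycleRange.symm * finRotate (m + 1)) := by
  rw [List.filter_ne_finRange, List.finRange_succ_last]
  simp [Function.comp_def, Fin.coeSucc_eq_succ]

section

variable {R : Type*} [Ring R] {n : ℕ}

def signedProd (A : Matrix (Fin n) (Fin n) R) (L : List (Fin n)) (α β : Perm (Fin n)) : R :=
  ((Perm.sign α : ℤ) * (Perm.sign β : ℤ)) • (L.map fun i => A (α i) (β i)).prod

lemma sdet_eq_sum_signedProd (A : Matrix (Fin n) (Fin n) R) :
    sdet A = ∑ α, ∑ β, signedProd A (List.finRange n) α β := by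
  simp only [sdet, signedProd, List.ofFn_eq_map]

lemma preadj_apply (A : Matrix (Fin n) (Fin n) R) (r s : Fin n) :
    preadj A r s = ∑ α with α s = s, ∑ β with β s = r,
      signedProd A ((List.finRange n).filter fun i => i ≠ s) α β :=
  rfl

lemma signedProd_cons (A : Matrix (Fin n) (Fin n) R) (i : Fin n) (L : List (Fin n))
    (α β : Perm (Fin n)) :
    signedProd A (i :: L) α β = A (α i) (β i) * signedProd A L α β := by
  simp only [signedProd, List.map_cons, List.prod_cons, mul_smul_comm]

lemma signedProd_append_singleton (A : Matrix (Fin n) (Fin n) R) (L : List (Fin n)) (i : Fin n)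
    (α β : Perm (Fin n)) :
    signedProd A (L ++ [i]) α β = signedProd A L α β * A (α i) (β i) := by
  simp only [signedProd, List.map_append, List.map_singleton, List.prod_append,
    List.prod_singleton, smul_mul_assoc]

lemma signedProd_map_perm (A : Matrix (Fin n) (Fin n) R) (L : List (Fin n))
    (α β π : Perm (Fin n)) :
    signedProd A (L.map π) α β = signedProd A L (α * π) (β * π) := by
  have hsign : Perm.sign (α * π) * Perm.sign (β * π) = Perm.sign α * Perm.sign β := by
    rw [Perm.sign_mul, Perm.sign_mul, mul_mul_mul_comm, Int.units_mul_self, mul_one]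
  simp only [signedProd, List.map_map, ← Units.val_mul, hsign]
  rfl

lemma sum_signedProd_map_of_fixed_eq_sdet (A : Matrix (Fin n) (Fin n) R)
    (σ : Fin n → Perm (Fin n)) (j : Fin n) (hσ : ∀ k, σ k j = k) :
    ∑ k, ∑ α with α k = k, ∑ β, signedProd A ((List.finRange n).map (σ k)) α β = sdet A := by
  have reindex (k : Fin n) :
      ∑ α with α k = k, ∑ β, signedProd A ((List.finRange n).map (σ k)) α β
        = ∑ α with α j = k, ∑ β, signedProd A (List.finRange n) α β := by
    refine sum_nbij' (· * σ k) (· * (σ k)⁻¹) ?_ ?_ (fun _ _ => by simp) (fun _ _ => by simp)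
      fun α _ => ?_
    · simp +contextual [hσ]
    · have : (σ k).symm k = j := (σ k).symm_apply_eq.mpr (hσ k).symm
      simp +contextual [this]
    · simp only [signedProd_map_perm]
      exact Fintype.sum_equiv (Equiv.mulRight (σ k)) _ _ fun _ => rfl
  simp only [reindex, sum_fiberwise, sdet_eq_sum_signedProd]

lemma trace_mul_preadj (A : Matrix (Fin n) (Fin n) R) :
    (A * preadj A).trace = ∑ k, ∑ α with α k = k, ∑ β,
      signedProd A (k :: (List.finRange n).filter fun i => i ≠ k) α β := by
  simp only [Matrix.trace, Matrix.diag_apply, Matrix.mul_apply]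
  refine sum_congr rfl fun k _ => ?_
  simp only [preadj_apply, mul_sum]
  rw [sum_comm]
  refine sum_congr rfl fun α hα => ?_
  rw [← sum_fiberwise _ fun β : Perm (Fin n) => β k]
  refine sum_congr rfl fun c _ => sum_congr rfl fun β hβ => ?_
  rw [signedProd_cons, (mem_filter.mp hα).2, (mem_filter.mp hβ).2]

lemma trace_preadj_mul (A : Matrix (Fin n) (Fin n) R) :
    (preadj A * A).trace = ∑ k, ∑ α with α k = k, ∑ β,
      signedProd A ((List.finRange n).filter (fun i => i ≠ k) ++ [k]) α β := by
  simp only [Matrix.trace, Matrix.diag_apply, Matrix.mul_apply]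
  rw [sum_comm]
  refine sum_congr rfl fun k _ => ?_
  simp only [preadj_apply, sum_mul]
  rw [sum_comm]
  refine sum_congr rfl fun α hα => ?_
  rw [← sum_fiberwise _ fun β : Perm (Fin n) => β k]
  refine sum_congr rfl fun c _ => sum_congr rfl fun β hβ => ?_
  rw [signedProd_append_singleton, (mem_filter.mp hα).2, (mem_filter.mp hβ).2]

end

theorem trace_mul_preadj_eq_trace_preadj_mul {R : Type*} [Ring R] {n : ℕ}
    (A : Matrix (Fin n) (Fin n) R) :
    Matrix.trace (A * preadj A) = Matrix.trace (preadj A * A) := by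
  obtain _ | m := n
  · exact congrArg _ (Subsingleton.elim _ _)
  rw [trace_mul_preadj, trace_preadj_mul]
  simp only [List.cons_filter_ne_finRange, List.filter_ne_finRange_append]
  rw [sum_signedProd_map_of_fixed_eq_sdet A _ 0 fun k => k.cycleRange_symm_zero,
    sum_signedProd_map_of_fixed_eq_sdet A _ (Fin.last m) fun k => by simp]
end

section
/- If R is a commutative ring and A ∈ M_n(R), then the preadjoint matrix satisfies A* = (n-1)! · adj(A), where adj(A) is the classical adjugate of A. -/
open Matrix Polynomial

/-! For `α` fixing `s`, the substitution `σ = α β⁻¹` (so `sgn α sgn β = sgn σ` and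
`a_{α i, β i} = a_{σ j, j}` with `j = β i`) turns the inner sum over `β` in `A*_{rs}` into the
permutation expansion of `adj(A)_{rs}`; the outer sum then just counts the `(n-1)!`
permutations fixing `s`. -/

open Finset Equiv

lemma List.prod_map_filter_finRange_ne {M : Type*} [CommMonoid M] {n : ℕ} (s : Fin n)
    (f : Fin n → M) :
    (((List.finRange n).filter (fun i => i ≠ s)).map f).prod = ∏ i ∈ univ.erase s, f i := by
  rw [← filter_ne', Finset.prod]; rfl

lemma Equiv.Perm.card_filter_apply_eq_self {α : Type*} [Fintype α] [DecidableEq α] (a : α) :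
    #{σ : Perm α | σ a = a} = (Fintype.card α - 1).factorial := by
  have e : {σ : Perm α // σ a = a} ≃ Perm {b : α // b ≠ a} :=
    (subtypeEquivRight fun σ => ⟨fun h b hb => not_not.mp hb ▸ h, fun h => h a (by simp)⟩).trans
      (Perm.subtypeEquivSubtypePerm (· ≠ a)).symm
  rw [← Fintype.card_subtype, Fintype.card_congr e, Fintype.card_perm,
    Fintype.card_subtype_compl, Fintype.card_subtype_eq]

lemma Matrix.adjugate_apply_eq_sum {n R : Type*} [Fintype n] [DecidableEq n] [CommRing R]
    (A : Matrix n n R) (r s : n) :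
    A.adjugate r s = ∑ σ ∈ univ.filter (fun σ : Perm n => σ r = s),
      (Perm.sign σ : ℤ) • ∏ i ∈ univ.erase r, A (σ i) i := by
  rw [adjugate_apply, det_apply, sum_filter]
  refine sum_congr rfl fun σ _ => ?_
  rw [← mul_prod_erase univ _ (mem_univ r), Units.smul_def]
  split_ifs with hσ
  · rw [hσ, updateRow_self, Pi.single_eq_same, one_mul]
    congr 1
    refine prod_congr rfl fun i hi => ?_
    rw [updateRow_ne fun h => ne_of_mem_erase hi (σ.injective (h.trans hσ.symm))]
  · -- the only row-`s` factor is taken at column `σ⁻¹ s ≠ r`, where the updated row vanishes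
    have hr : σ.symm s ≠ r := fun h => hσ (by rw [← h]; simp)
    rw [prod_eq_zero (mem_erase.mpr ⟨hr, mem_univ _⟩) (by simp [hr]), mul_zero, smul_zero]

lemma Matrix.sum_sign_mul_sign_smul_prod_erase_eq_adjugate_apply {n R : Type*} [Fintype n]
    [DecidableEq n] [CommRing R] (A : Matrix n n R) {α : Perm n} {r s : n} (hα : α s = s) :
    ∑ β ∈ univ.filter (fun β : Perm n => β s = r),
        ((Perm.sign α : ℤ) * Perm.sign β) • ∏ i ∈ univ.erase s, A (α i) (β i)
      = A.adjugate r s := by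
  rw [adjugate_apply_eq_sum]
  refine sum_equiv ((Equiv.inv _).trans (Equiv.mulLeft α)) (fun β => ?_) fun β hβ => ?_
  · simp only [mem_filter, mem_univ, true_and, trans_apply, Equiv.inv_apply, Equiv.coe_mulLeft,
      Perm.mul_apply]
    rw [← hα, α.injective.eq_iff, Perm.inv_eq_iff_eq, eq_comm, hα]
  · rw [mem_filter] at hβ
    simp only [trans_apply, Equiv.inv_apply, Equiv.coe_mulLeft, map_mul, Perm.sign_inv,
      Units.val_mul]
    congr 1
    rw [← hβ.2]
    exact prod_equiv β (by simp) fun i _ => by simp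

theorem preadj_eq_factorial_smul_adjugate {R : Type*} [CommRing R] {n : ℕ}
    (A : Matrix (Fin n) (Fin n) R) :
    preadj A = (n - 1).factorial • A.adjugate := by
  ext r s
  simp only [preadj, Matrix.smul_apply, List.prod_map_filter_finRange_ne]
  rw [sum_congr rfl fun α hα =>
      A.sum_sign_mul_sign_smul_prod_erase_eq_adjugate_apply (mem_filter.mp hα).2,
    sum_const, Perm.card_filter_apply_eq_self, Fintype.card_fin]
end

section
/- For any ring R, any A ∈ M_n(R), and any invertible matrix T ∈ GL_n(Z(R)) with entries in the center Z(R) of R, the preadjoint satisfies (T⁻¹AT)* = T⁻¹ A* T. -/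
open Matrix Polynomial

/-!
Write `mixedSdet C` for the symmetric determinant in which the `i`-th factor of every product is
taken from its own matrix `C i`. Expanding along the first factor gives
`mixedSdet (M, B, …, B) = trace (M * B*)`, so `X* r s = mixedSdet (E, X, …, X)` with
`E = single s r 1`. When `S` and `T` have central entries, `mixedSdet (S C_i T) = det S det T ·
mixedSdet C`, because `S ↦ mixedSdet (S C_i)` is an alternating multilinear function of the rows
of `S` over the centre. With `X = S A T` and `E = S (T E S) T` this gives
`(S A T)* r s = mixedSdet (T E S, A, …, A) = trace (T E S A*) = (S A* T) r s`, the last step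
because `T` has central entries.
-/

open Equiv Equiv.Perm Finset

section

variable {R : Type*} [Ring R]

theorem List.filter_finRange_ne {m : ℕ} (s : Fin (m + 1)) :
    (List.finRange (m + 1)).filter (· ≠ s) = List.ofFn s.succAbove := by
  have hlt : ((List.finRange (m + 1)).filter (· ≠ s)).Pairwise (· < ·) :=
    (List.pairwise_lt_finRange _).filter _
  have hlt' : (List.ofFn s.succAbove).Pairwise (· < ·) :=
    List.pairwise_ofFn.mpr fun _ _ h => Fin.strictMono_succAbove s h
  refine List.Perm.eq_of_pairwise' hlt hlt' ?_
  refine (List.perm_ext_iff_of_nodup (hlt.imp ne_of_lt) (hlt'.imp ne_of_lt)).mpr fun i => ?_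
  simp [Fin.exists_succAbove_eq_iff]

/-- Polarisation of `sdet`: the `i`-th factor of each product is an entry of `C i`, so that
`sdet A = mixedSdet fun _ => A`. -/
def mixedSdet {n : ℕ} (C : Fin n → Matrix (Fin n) (Fin n) R) : R :=
  ∑ α : Perm (Fin n), ∑ β : Perm (Fin n),
    ((sign α : ℤ) * (sign β : ℤ)) • (List.ofFn fun i => C i (α i) (β i)).prod

theorem preadj_apply_eq_sum_succAbove {m : ℕ} (B : Matrix (Fin (m + 1)) (Fin (m + 1)) R)
    (v u : Fin (m + 1)) :
    preadj B v u = ∑ α ∈ univ.filter (fun α : Perm (Fin (m + 1)) => α u = u),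
      ∑ β ∈ univ.filter (fun β : Perm (Fin (m + 1)) => β u = v),
        ((sign α : ℤ) * (sign β : ℤ)) •
          (List.ofFn fun j => B (α (u.succAbove j)) (β (u.succAbove j))).prod := by
  simp only [preadj, List.filter_finRange_ne, List.map_ofFn]
  rfl

theorem Equiv.Perm.sign_mul_right_mul_sign_mul_right_s4 {ι : Type*} [DecidableEq ι] [Fintype ι]
    (α β γ : Perm ι) : (sign (α * γ) : ℤ) * sign (β * γ) = sign α * sign β := by
  rw [← Units.val_mul, ← Units.val_mul, sign_mul, sign_mul, mul_mul_mul_comm,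
    Int.units_mul_self, mul_one]

/-- Relabelling the factors cyclically by `u.cycleRange` moves the factor taken from `M`
from position `0` to position `u`, which is the position omitted in `preadj B _ u`. -/
theorem mixedSdet_cons {m : ℕ} (M B : Matrix (Fin (m + 1)) (Fin (m + 1)) R) :
    mixedSdet (Fin.cons M fun _ => B) = trace (M * preadj B) := by
  let F (α β : Perm (Fin (m + 1))) : R := ((sign α : ℤ) * (sign β : ℤ)) •
    (M (α 0) (β 0) * (List.ofFn fun j => B (α j.succ) (β j.succ)).prod)
  have hF : mixedSdet (Fin.cons M fun _ => B) = ∑ α, ∑ β, F α β := by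
    simp only [mixedSdet, List.ofFn_succ, List.prod_cons, Fin.cons_zero, Fin.cons_succ, F]
  have hfiber (u : Fin (m + 1)) :
      ∑ α ∈ univ.filter (fun α : Perm (Fin (m + 1)) => α 0 = u), ∑ β, F α β
        = ∑ v, M u v * preadj B v u := by
    let d : Perm (Fin (m + 1)) := u.cycleRange.symm
    have hreindex : ∑ α ∈ univ.filter (fun α : Perm (Fin (m + 1)) => α 0 = u), ∑ β, F α β
        = ∑ α ∈ univ.filter (fun α : Perm (Fin (m + 1)) => α u = u), ∑ β, F (α * d) (β * d) :=
      (sum_equiv (Equiv.mulRight d) (fun α => by simp [d, Fin.cycleRange_symm_zero])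
        fun α _ => Fintype.sum_equiv (Equiv.mulRight d) _ _ fun _ => rfl).symm
    simp only [hreindex, preadj_apply_eq_sum_succAbove, mul_sum, mul_smul_comm]
    refine Eq.trans ?_ Finset.sum_comm
    refine sum_congr rfl fun α hα => ?_
    rw [← sum_fiberwise univ (fun β : Perm (Fin (m + 1)) => β u)]
    refine sum_congr rfl fun v _ => sum_congr rfl fun β hβ => ?_
    simp only [mem_filter] at hα hβ
    simp only [F, sign_mul_right_mul_sign_mul_right_s4, Perm.mul_apply, d,
      Fin.cycleRange_symm_zero, Fin.cycleRange_symm_succ, hα.2, hβ.2]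
  rw [hF, ← sum_fiberwise univ (fun α : Perm (Fin (m + 1)) => α 0)]
  simp only [hfiber, trace, Matrix.diag, Matrix.mul_apply]

theorem AlternatingMap.eq_basis_det_smulRight {K M N ι : Type*} [CommRing K] [AddCommGroup M]
    [Module K M] [AddCommGroup N] [Module K N] [Fintype ι] [DecidableEq ι]
    (e : Module.Basis ι K M) (f : M [⋀^ι]→ₗ[K] N) : f = e.det.smulRight (f e) := by
  refine e.ext_alternating fun i hi => ?_
  let σ : Perm ι := Equiv.ofBijective i (Finite.injective_iff_bijective.1 hi)
  change f (e ∘ σ) = e.det.smulRight (f e) (e ∘ σ)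
  rw [f.map_perm, AlternatingMap.smulRight_apply, e.det.map_perm, e.det_self]
  simp [Units.smul_def, Int.cast_smul_eq_zsmul]

section RowForm

variable {K : Type*} [CommRing K] [Algebra K R] {n : ℕ}

def mixedSdetRowForm (C : Fin n → Matrix (Fin n) (Fin n) R) :
    MultilinearMap K (fun _ : Fin n => Fin n → K) R :=
  ∑ β : Perm (Fin n), sign β • (MultilinearMap.mkPiAlgebraFin K n R).compLinearMap
    fun i => Fintype.linearCombination K fun a => C i a (β i)

theorem alternatization_mixedSdetRowForm_apply (C : Fin n → Matrix (Fin n) (Fin n) R)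
    (S : Matrix (Fin n) (Fin n) K) :
    (mixedSdetRowForm C).alternatization (fun i => S i)
      = mixedSdet fun i => S.map (algebraMap K R) * C i := by
  rw [MultilinearMap.alternatization_apply]
  simp [mixedSdetRowForm, mixedSdet, Matrix.mul_apply, Fintype.linearCombination_apply,
    Algebra.smul_def, smul_sum, Units.smul_def, mul_assoc]

theorem mixedSdet_map_mul (S : Matrix (Fin n) (Fin n) K) (C : Fin n → Matrix (Fin n) (Fin n) R) :
    mixedSdet (fun i => S.map (algebraMap K R) * C i) = algebraMap K R S.det * mixedSdet C := by
  have hbasis : ⇑(Pi.basisFun K (Fin n)) = fun i => (1 : Matrix (Fin n) (Fin n) K) i := by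
    ext i j
    simp [Matrix.one_apply, Pi.single_apply, eq_comm]
  rw [← alternatization_mixedSdetRowForm_apply, AlternatingMap.eq_basis_det_smulRight
    (Pi.basisFun K (Fin n)) (mixedSdetRowForm C).alternatization, AlternatingMap.smulRight_apply,
    Pi.basisFun_det_apply, hbasis, alternatization_mixedSdetRowForm_apply]
  simp only [Matrix.map_one _ (map_zero _) (map_one _), one_mul, Algebra.smul_def]
  rfl

end RowForm

theorem mixedSdet_transpose {n : ℕ} (C : Fin n → Matrix (Fin n) (Fin n) R) :
    mixedSdet (fun i => (C i)ᵀ) = mixedSdet C := by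
  rw [mixedSdet, Finset.sum_comm]
  refine Fintype.sum_congr _ _ fun β => Fintype.sum_congr _ _ fun α => ?_
  rw [mul_comm]
  rfl

section CentralScalars

variable {K : Type*} [CommRing K] [Algebra K R]

theorem Matrix.transpose_mul_map_algebraMap {l m n : Type*} [Fintype m]
    (C : Matrix l m R) (T : Matrix m n K) :
    (C * T.map (algebraMap K R))ᵀ = Tᵀ.map (algebraMap K R) * Cᵀ := by
  ext i j
  simp [Matrix.mul_apply, Algebra.commutes]

theorem mixedSdet_mul_map {n : ℕ} (C : Fin n → Matrix (Fin n) (Fin n) R)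
    (T : Matrix (Fin n) (Fin n) K) :
    mixedSdet (fun i => C i * T.map (algebraMap K R)) = algebraMap K R T.det * mixedSdet C := by
  rw [← mixedSdet_transpose]
  simp only [transpose_mul_map_algebraMap]
  rw [mixedSdet_map_mul, det_transpose, mixedSdet_transpose]

theorem mixedSdet_map_mul_mul_map {n : ℕ} (S T : Matrix (Fin n) (Fin n) K)
    (C : Fin n → Matrix (Fin n) (Fin n) R) :
    mixedSdet (fun i => S.map (algebraMap K R) * C i * T.map (algebraMap K R))
      = algebraMap K R (S.det * T.det) * mixedSdet C := by
  rw [mixedSdet_mul_map (fun i => S.map (algebraMap K R) * C i), mixedSdet_map_mul, ← mul_assoc,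
    ← map_mul, mul_comm T.det]

end CentralScalars

theorem Matrix.trace_mul_comm_of_mem_center {n : Type*} [Fintype n] (T Y : Matrix n n R)
    (hT : ∀ i j, T i j ∈ Set.center R) : (T * Y).trace = (Y * T).trace := by
  simp only [trace, Matrix.diag, Matrix.mul_apply]
  rw [Finset.sum_comm]
  exact sum_congr rfl fun i _ => sum_congr rfl fun j _ =>
    (Semigroup.mem_center_iff.mp (hT j i) (Y i j)).symm

theorem Matrix.mem_center_of_mul_eq_one {n : Type*} [Fintype n] [DecidableEq n]
    {T S : Matrix n n R} (hT : ∀ i j, T i j ∈ Set.center R) (hST : S * T = 1) (hTS : T * S = 1)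
    (i j : n) : S i j ∈ Set.center R := by
  refine Semigroup.mem_center_iff.mpr fun g => ?_
  have hcomm : Commute (diagonal fun _ => g) T := by
    ext a b
    simp [diagonal_mul, mul_diagonal, Semigroup.mem_center_iff.mp (hT a b)]
  have hcommS := congrFun₂ (hcomm.units_inv_right (u := ⟨T, S, hTS, hST⟩)).eq i j
  simpa [diagonal_mul, mul_diagonal] using hcommS

end

theorem preadj_conj {R : Type*} [Ring R] {n : ℕ}
    (A T S : Matrix (Fin n) (Fin n) R)
    (hT : ∀ i j, T i j ∈ Set.center R)
    (hST : S * T = 1) (hTS : T * S = 1) :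
    preadj (S * A * T) = S * preadj A * T := by
  obtain _ | m := n
  · exact Subsingleton.elim _ _
  ext r s
  let incl : Subring.center R →+* R := algebraMap (Subring.center R) R
  let T₀ : Matrix (Fin (m + 1)) (Fin (m + 1)) (Subring.center R) :=
    of fun i j => ⟨T i j, hT i j⟩
  let S₀ : Matrix (Fin (m + 1)) (Fin (m + 1)) (Subring.center R) :=
    of fun i j => ⟨S i j, mem_center_of_mul_eq_one hT hST hTS i j⟩
  have hT₀ : T₀.map incl = T := rfl
  have hS₀ : S₀.map incl = S := rfl
  have hdet : incl (S₀.det * T₀.det) = 1 := by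
    have hST₀ : S₀ * T₀ = 1 := map_injective (f := incl) Subtype.val_injective <| by
      dsimp only
      rw [Matrix.map_mul (f := incl), hS₀, hT₀, hST, Matrix.map_one incl (map_zero incl) (map_one incl)]
    rw [← det_mul, hST₀, det_one, map_one]
  let E : Matrix (Fin (m + 1)) (Fin (m + 1)) R := single s r 1
  have hcons : (Fin.cons E fun _ => S * A * T : Fin (m + 1) → Matrix _ _ R)
      = fun i => S * (Fin.cons (T * E * S) fun _ => A : Fin (m + 1) → Matrix _ _ R) i * T := by
    funext i
    cases i using Fin.cases <;> simp [← Matrix.mul_assoc, hST, Matrix.mul_assoc _ S T]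
  calc preadj (S * A * T) r s
      = trace (E * preadj (S * A * T)) := by simp [E, trace_single_mul]
    _ = mixedSdet (Fin.cons E fun _ => S * A * T) := (mixedSdet_cons _ _).symm
    _ = mixedSdet (Fin.cons (T * E * S) fun _ => A) := by
      rw [hcons, ← hS₀, ← hT₀, mixedSdet_map_mul_mul_map, hdet, one_mul]
    _ = trace (T * (E * S * preadj A)) := by
      rw [mixedSdet_cons, Matrix.mul_assoc, Matrix.mul_assoc, Matrix.mul_assoc]
    _ = trace (E * (S * preadj A * T)) := by
      rw [trace_mul_comm_of_mem_center _ _ hT]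
      simp only [Matrix.mul_assoc]
    _ = (S * preadj A * T) r s := by simp [E, trace_single_mul]
end

section
/- For any ring R and A ∈ M_n(R), the matrix n·A*·A − tr(A*·A)·I has trace zero and all of its entries lie in the additive commutator subgroup [R,R]. -/
/-!
Work in `R ⧸ [R, R]`, where the product of a list is invariant under cyclic rotation.
In the term of `(A* A)_{rj} = ∑ₛ A*_{rs} a_{sj}` indexed by `α, β` with `α s = s`, `β s = r`,
rotating `a_{sj}` to the front and renumbering positions turns it into a signed product
`a_{α 0, β' 0} ⋯ a_{α (n-1), β' (n-1)}` whose pivot position `0` carries the column `j`.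
Cyclic rotation of positions shows that the same signed sum arises with the pivot at any
position `q`. Summing over `q`, `n (A* A)_{rj}` is congruent to the signed sum over all
`α, β` of `a_{α 0, β' 0} ⋯ a_{α (n-1), β' (n-1)}`, where `β'` is `β` with its value `r`
replaced by `j`. For `r ≠ j` the involution `β ↦ (r j) β` cancels these terms in pairs;
for `r = j` the sum is `sdet A`, which is also congruent to `tr (A* A)`.
-/

open Matrix Polynomial

open Equiv Function

section UniversalTrace

variable (R : Type*) [Ring R]

def commutatorAddSubgroup : AddSubgroup R :=
  AddSubgroup.closure {x : R | ∃ u v : R, x = u * v - v * u}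

def universalTrace : R →+ R ⧸ commutatorAddSubgroup R :=
  QuotientAddGroup.mk' _

variable {R}

theorem universalTrace_eq_zero_iff {x : R} :
    universalTrace R x = 0 ↔ x ∈ commutatorAddSubgroup R :=
  QuotientAddGroup.eq_zero_iff x

theorem universalTrace_mul_comm (a b : R) :
    universalTrace R (a * b) = universalTrace R (b * a) :=
  QuotientAddGroup.eq.mpr <| by
    rw [neg_add_eq_sub]
    exact AddSubgroup.subset_closure ⟨b, a, rfl⟩

theorem universalTrace_prod_rotate (l : List R) (k : ℕ) :
    universalTrace R (l.rotate k).prod = universalTrace R l.prod := by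
  rw [← List.rotate_mod, List.rotate_eq_drop_append_take_mod, List.prod_append,
    universalTrace_mul_comm, ← List.prod_append, List.take_append_drop]

end UniversalTrace

theorem List.ofFn_add_eq_rotate {α : Type*} {m : ℕ} (f : Fin (m + 1) → α) (q : Fin (m + 1)) :
    List.ofFn (fun p => f (p + q)) = (List.ofFn f).rotate q := by
  apply List.ext_getElem (by simp)
  intro i h₁ h₂
  simp only [List.getElem_rotate, List.getElem_ofFn, List.length_ofFn]
  congr 1

theorem List.ofFn_cycleRange_symm {α : Type*} {m : ℕ} (f : Fin (m + 1) → α)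
    (s : Fin (m + 1)) :
    List.ofFn (fun p => f (s.cycleRange.symm p)) =
      f s :: ((List.finRange (m + 1)).filter (· ≠ s)).map f := by
  have hfilter : List.ofFn s.succAbove = (List.finRange (m + 1)).filter (· ≠ s) :=
    (Fin.strictMono_succAbove s).sortedLT_ofFn.eq_of_mem_iff
      ((List.sortedLT_finRange _).pairwise.filter _).sortedLT (by simp)
  rw [List.ofFn_succ, ← hfilter, List.map_ofFn]
  simp [Function.comp_def]

theorem Equiv.Perm.update_swap_mul {α : Type*} [DecidableEq α] (x y : α) (β : Perm α) :
    update ⇑(swap x y * β) ((swap x y * β)⁻¹ x) y = update β (β⁻¹ x) y := by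
  have hinv : (swap x y * β)⁻¹ x = β⁻¹ y := by
    rw [_root_.mul_inv_rev, swap_inv, Perm.mul_apply, swap_apply_left]
  funext p
  simp only [hinv, update_apply, Perm.mul_apply, swap_apply_def, Perm.eq_inv_iff_eq]
  grind

section SignedPairSum

variable {ι M : Type*} [Fintype ι] [DecidableEq ι] [AddCommGroup M]

def signedPairSum (f : Perm ι → Perm ι → M) : M :=
  ∑ α, ∑ β, ((Perm.sign α : ℤ) * Perm.sign β) • f α β

theorem signedPairSum_comp_mul_right (σ : Perm ι) (f : Perm ι → Perm ι → M) :
    signedPairSum (fun α β => f (α * σ) (β * σ)) = signedPairSum f := by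
  have hsign (α β : Perm ι) : ((Perm.sign (α * σ) : ℤ) * Perm.sign (β * σ)) =
      (Perm.sign α : ℤ) * Perm.sign β := by
    rw [← Units.val_mul, ← Units.val_mul, Perm.sign_mul, Perm.sign_mul, mul_mul_mul_comm,
      Int.units_mul_self, mul_one]
  refine Fintype.sum_equiv (Equiv.mulRight σ) _ _ fun α =>
    Fintype.sum_equiv (Equiv.mulRight σ) _ _ fun β => ?_
  rw [Equiv.coe_mulRight, hsign]

theorem signedPairSum_eq_zero_of_swap_mul {x y : ι} (hxy : x ≠ y)
    {f : Perm ι → Perm ι → M} (hf : ∀ α β, f α (swap x y * β) = f α β) :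
    signedPairSum f = 0 := by
  refine Finset.sum_eq_zero fun α _ => ?_
  refine Finset.sum_ninvolution (swap x y * ·) (fun β => ?_) (fun β _ h => hxy ?_)
    (fun _ => Finset.mem_univ _) (fun β => swap_mul_self_mul x y β)
  · rw [hf, Perm.sign_mul, Perm.sign_swap hxy, Units.val_mul, Units.val_neg, Units.val_one,
      neg_one_mul, mul_neg, neg_smul, add_neg_cancel]
  · exact swap_eq_one_iff.mp (mul_right_cancel (h.trans (one_mul β).symm))

theorem sum_signedPairSum {κ : Type*} (s : Finset κ) (f : κ → Perm ι → Perm ι → M) :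
    ∑ k ∈ s, signedPairSum (f k) = signedPairSum fun α β => ∑ k ∈ s, f k α β := by
  simp only [signedPairSum, Finset.smul_sum]
  rw [Finset.sum_comm]
  exact Fintype.sum_congr _ _ fun α => Finset.sum_comm

end SignedPairSum

section PreadjMul

variable {R : Type*} [Ring R]

def orderedProd {n : ℕ} (A : Matrix (Fin n) (Fin n) R) (α β : Fin n → Fin n) : R :=
  (List.ofFn fun i => A (α i) (β i)).prod

theorem universalTrace_sdet {n : ℕ} (A : Matrix (Fin n) (Fin n) R) :
    universalTrace R (sdet A) =
      signedPairSum fun α β => universalTrace R (orderedProd A α β) := by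
  simp only [sdet, map_sum, map_zsmul]
  rfl

variable {m : ℕ} (A : Matrix (Fin (m + 1)) (Fin (m + 1)) R)

theorem universalTrace_orderedProd_add_right (α β : Fin (m + 1) → Fin (m + 1))
    (q : Fin (m + 1)) :
    universalTrace R (orderedProd A (fun p => α (p + q)) (fun p => β (p + q))) =
      universalTrace R (orderedProd A α β) := by
  rw [orderedProd, List.ofFn_add_eq_rotate (fun i => A (α i) (β i)), universalTrace_prod_rotate,
    orderedProd]

theorem universalTrace_prod_filter_ne_mul {α β : Fin (m + 1) → Fin (m + 1)} {s : Fin (m + 1)}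
    (hα : α s = s) (j : Fin (m + 1)) :
    universalTrace R
        ((((List.finRange (m + 1)).filter (· ≠ s)).map fun i => A (α i) (β i)).prod * A s j) =
      universalTrace R
        (orderedProd A (α ∘ s.cycleRange.symm) (update β s j ∘ s.cycleRange.symm)) := by
  have hfilter : (((List.finRange (m + 1)).filter (· ≠ s)).map fun i => A (α i) (β i)) =
      ((List.finRange (m + 1)).filter (· ≠ s)).map fun i => A (α i) (update β s j i) :=
    List.map_congr_left fun i hi => by rw [update_of_ne (by simpa using List.of_mem_filter hi)]
  have hpivot := List.ofFn_cycleRange_symm (fun i => A (α i) (update β s j i)) s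
  beta_reduce at hpivot
  rw [universalTrace_mul_comm, orderedProd]
  simp only [Function.comp_apply]
  rw [hpivot, List.prod_cons, update_self, hα, hfilter]

def pivotSum (r j q : Fin (m + 1)) : R ⧸ commutatorAddSubgroup R :=
  signedPairSum fun α β =>
    if β q = r then universalTrace R (orderedProd A α (update β q j)) else 0

theorem pivotSum_eq_pivotSum_zero (r j q : Fin (m + 1)) :
    pivotSum A r j q = pivotSum A r j 0 := by
  symm
  rw [pivotSum, pivotSum, ← signedPairSum_comp_mul_right (Equiv.addRight q)]
  congr 1
  funext α β
  have hupdate : update ⇑(β * Equiv.addRight q) 0 j = update β q j ∘ Equiv.addRight q := by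
    rw [update_comp_equiv]
    simp [Perm.coe_mul]
  simp only [Perm.mul_apply, Equiv.coe_addRight, zero_add, hupdate]
  exact congrArg (ite _ · 0) (universalTrace_orderedProd_add_right A α (update β q j) q)

theorem universalTrace_preadj_mul_apply (r j : Fin (m + 1)) :
    universalTrace R ((preadj A * A) r j) = pivotSum A r j 0 := by
  -- `σ = (cycleRange s)⁻¹` sends position `0` to `s`, so reindexing by `σ` moves the pivot to `0`
  have hcol (s : Fin (m + 1)) : universalTrace R (preadj A r s * A s j) =
      signedPairSum fun α β => if α 0 = s then
        if β 0 = r then universalTrace R (orderedProd A α (update β 0 j)) else 0 else 0 := by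
    set σ := s.cycleRange.symm
    have hσ : σ 0 = s := Fin.cycleRange_symm_zero s
    have hupdate (β : Perm (Fin (m + 1))) : update ⇑(β * σ) 0 j = update β s j ∘ σ := by
      rw [update_comp_equiv, Perm.coe_mul]
      simp [σ]
    rw [← signedPairSum_comp_mul_right σ]
    simp only [preadj, Finset.sum_mul, smul_mul_assoc, map_sum, map_zsmul]
    simp only [Finset.sum_filter, signedPairSum, Perm.mul_apply, hσ, hupdate]
    refine Fintype.sum_congr _ _ fun α => ?_
    split_ifs with hα
    · refine Fintype.sum_congr _ _ fun β => ?_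
      split_ifs
      · rw [universalTrace_prod_filter_ne_mul A hα]; rfl
      · rw [smul_zero]
    · simp
  rw [Matrix.mul_apply, map_sum, Finset.sum_congr rfl fun s _ => hcol s, sum_signedPairSum,
    pivotSum]
  congr 1
  funext α β
  exact Fintype.sum_ite_eq (α 0) _

theorem universalTrace_trace_preadj_mul :
    universalTrace R (Matrix.trace (preadj A * A)) = universalTrace R (sdet A) := by
  rw [universalTrace_sdet, Matrix.trace, map_sum]
  simp only [Matrix.diag, universalTrace_preadj_mul_apply, pivotSum]
  rw [sum_signedPairSum]
  congr 1
  funext α β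
  rw [Fintype.sum_ite_eq (β 0) fun r => universalTrace R (orderedProd A α (update β 0 r)),
    update_eq_self]

theorem sum_pivotSum (r j : Fin (m + 1)) :
    ∑ q, pivotSum A r j q =
      signedPairSum fun α β => universalTrace R (orderedProd A α (update β (β⁻¹ r) j)) := by
  simp only [pivotSum]
  rw [sum_signedPairSum]
  congr 1
  funext α β
  simp only [← Perm.eq_inv_iff_eq]
  exact Fintype.sum_ite_eq' (β⁻¹ r) _

theorem nsmul_universalTrace_preadj_mul_apply (r j : Fin (m + 1)) :
    (m + 1) • universalTrace R ((preadj A * A) r j) =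
      signedPairSum fun α β => universalTrace R (orderedProd A α (update β (β⁻¹ r) j)) := by
  rw [← sum_pivotSum, universalTrace_preadj_mul_apply]
  simp [pivotSum_eq_pivotSum_zero A r j]

theorem nsmul_universalTrace_preadj_mul_apply_self (r : Fin (m + 1)) :
    (m + 1) • universalTrace R ((preadj A * A) r r) = universalTrace R (sdet A) := by
  rw [nsmul_universalTrace_preadj_mul_apply, universalTrace_sdet]
  congr 1
  funext α β
  rw [update_eq_self_iff.mpr (Perm.eq_inv_iff_eq.mp rfl).symm]

theorem nsmul_universalTrace_preadj_mul_apply_of_ne {r j : Fin (m + 1)} (hrj : r ≠ j) :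
    (m + 1) • universalTrace R ((preadj A * A) r j) = 0 := by
  rw [nsmul_universalTrace_preadj_mul_apply]
  exact signedPairSum_eq_zero_of_swap_mul hrj fun α β => by rw [Perm.update_swap_mul]

end PreadjMul

theorem preadj_mul_trace_zero_and_commutator {R : Type*} [Ring R] {n : ℕ}
    (A : Matrix (Fin n) (Fin n) R) :
    Matrix.trace (n • (preadj A * A) - Matrix.scalar (Fin n) (Matrix.trace (preadj A * A))) = 0 ∧
    ∀ i j, (n • (preadj A * A) - Matrix.scalar (Fin n) (Matrix.trace (preadj A * A))) i j ∈
      AddSubgroup.closure {x : R | ∃ u v : R, x = u * v - v * u} := by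
  constructor
  · rw [Matrix.trace_sub, Matrix.trace_smul, Matrix.scalar_apply, Matrix.trace_diagonal]
    simp
  intro i j
  obtain ⟨m, rfl⟩ : ∃ m, n = m + 1 := Nat.exists_eq_succ_of_ne_zero i.pos.ne'
  refine universalTrace_eq_zero_iff.mp ?_
  rw [Matrix.sub_apply, Matrix.smul_apply, Matrix.scalar_apply, Matrix.diagonal_apply, map_sub,
    map_nsmul]
  rcases eq_or_ne i j with rfl | hij
  · rw [if_pos rfl, nsmul_universalTrace_preadj_mul_apply_self, universalTrace_trace_preadj_mul,
      sub_self]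
  · rw [if_neg hij, nsmul_universalTrace_preadj_mul_apply_of_ne A hij, map_zero, sub_zero]
end

section
/- Let R = R₀ ⊕ R₁ be a ℤ₂-graded ring and A ∈ M_{n,t}(R) an (n,t) supermatrix (i.e., a_{i,j} ∈ R₀ when i,j ≤ t or i,j > t, and a_{i,j} ∈ R₁ otherwise). Then the preadjoint A* is again an (n,t) supermatrix. -/
open Matrix Polynomial

/-! Give row and column `i` the parity `0` or `1` according as `i < t` or not; the supermatrix
condition then says that `a_{ij}` is homogeneous of degree `d i - d j`. In every monomial of
`A*_{rs}` the row indices `α i` and the column indices `β i` (`i ≠ s`) run over all indices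
but `s` and `r` respectively, so the degrees telescope to `d r - d s`, and a monomial of
homogeneous factors is homogeneous of the sum of their degrees. -/

theorem List.sum_map_filter_finRange_ne {M : Type*} [AddCommGroup M] {n : ℕ} (g : Fin n → M)
    (s : Fin n) : (((List.finRange n).filter (· ≠ s)).map g).sum = ∑ i, g i - g s := by
  rw [← Finset.sum_erase_eq_sub (Finset.mem_univ s),
    ← List.sum_toFinset _ ((List.nodup_finRange n).filter _)]
  congr 1
  ext
  simp

theorem preadj_mem_graded {ι R σ : Type*} [AddCommGroup ι] [Ring R] [SetLike σ R]
    [AddSubgroupClass σ R] (𝒜 : ι → σ) [SetLike.GradedMonoid 𝒜] {n : ℕ} (d : Fin n → ι)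
    (A : Matrix (Fin n) (Fin n) R) (hA : ∀ i j, A i j ∈ 𝒜 (d i - d j)) (r s : Fin n) :
    preadj A r s ∈ 𝒜 (d r - d s) := by
  refine sum_mem fun α hα => sum_mem fun β hβ => zsmul_mem ?_ _
  rw [Finset.mem_filter] at hα hβ
  have hdeg : (((List.finRange n).filter (· ≠ s)).map fun i => d (α i) - d (β i)).sum =
      d r - d s := by
    rw [List.sum_map_filter_finRange_ne, Finset.sum_sub_distrib, Equiv.sum_comp α d,
      Equiv.sum_comp β d, hα.2, hβ.2]
    abel
  exact hdeg ▸ SetLike.list_prod_map_mem_graded _ _ _ fun i _ => hA (α i) (β i)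

section EvenOdd

variable {R : Type*} [Ring R] (R₀ R₁ : AddSubgroup R)

def evenOdd : ZMod 2 → AddSubgroup R := fun d => if d = 0 then R₀ else R₁

theorem mem_evenOdd_ite {P : Prop} [Decidable P] {x : R} :
    x ∈ evenOdd R₀ R₁ (if P then 0 else 1) ↔ (P → x ∈ R₀) ∧ (¬P → x ∈ R₁) := by
  by_cases hP : P <;> simp [evenOdd, hP]

variable {R₀ R₁}

theorem eq_zero_of_mem_of_mem (hint : R₀ ⊓ R₁ = ⊥) {x : R} (h₀ : x ∈ R₀) (h₁ : x ∈ R₁) :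
    x = 0 := by
  simpa [hint] using AddSubgroup.mem_inf.mpr ⟨h₀, h₁⟩

/- Write `1 = e₀ + e₁`. Then `e₀ e₁ = e₀ - e₀ e₀` and `e₁ e₁ = e₁ - e₀ e₁` are both even and
odd, hence vanish, and `e₁ = (e₀ + e₁) e₁ = 0`. -/
theorem one_mem_even (hdec : ∀ r : R, ∃ r0 ∈ R₀, ∃ r1 ∈ R₁, r = r0 + r1)
    (hint : R₀ ⊓ R₁ = ⊥) (h00 : ∀ a ∈ R₀, ∀ b ∈ R₀, a * b ∈ R₀)
    (h01 : ∀ a ∈ R₀, ∀ b ∈ R₁, a * b ∈ R₁) (h11 : ∀ a ∈ R₁, ∀ b ∈ R₁, a * b ∈ R₀) :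
    (1 : R) ∈ R₀ := by
  obtain ⟨e₀, he₀, e₁, he₁, h1⟩ := hdec 1
  have h₀₁ : e₀ * e₁ = 0 := by
    refine eq_zero_of_mem_of_mem hint ?_ (h01 _ he₀ _ he₁)
    have : e₀ * e₁ = e₀ - e₀ * e₀ := by rw [eq_sub_iff_add_eq, ← mul_add, add_comm, ← h1, mul_one]
    exact this ▸ R₀.sub_mem he₀ (h00 _ he₀ _ he₀)
  have h₁₁ : e₁ * e₁ = 0 := by
    refine eq_zero_of_mem_of_mem hint (h11 _ he₁ _ he₁) ?_
    have : e₁ * e₁ = e₁ - e₀ * e₁ := by rw [eq_sub_iff_add_eq, ← add_mul, add_comm, ← h1, one_mul]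
    exact this ▸ R₁.sub_mem he₁ (h01 _ he₀ _ he₁)
  have he₁ : e₁ = 0 := by rw [← one_mul e₁, h1, add_mul, h₀₁, h₁₁, add_zero]
  simpa [h1, he₁] using he₀

theorem evenOdd_gradedMonoid (hone : (1 : R) ∈ R₀) (h00 : ∀ a ∈ R₀, ∀ b ∈ R₀, a * b ∈ R₀)
    (h01 : ∀ a ∈ R₀, ∀ b ∈ R₁, a * b ∈ R₁) (h10 : ∀ a ∈ R₁, ∀ b ∈ R₀, a * b ∈ R₁)
    (h11 : ∀ a ∈ R₁, ∀ b ∈ R₁, a * b ∈ R₀) : SetLike.GradedMonoid (evenOdd R₀ R₁) where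
  one_mem := hone
  mul_mem i j a b ha hb := by
    fin_cases i <;> fin_cases j
    exacts [h00 a ha b hb, h01 a ha b hb, h10 a ha b hb, h11 a ha b hb]

end EvenOdd

def blockParity (t : ℕ) {n : ℕ} (i : Fin n) : ZMod 2 := if (i : ℕ) < t then 0 else 1

theorem blockParity_sub (t : ℕ) {n : ℕ} (i j : Fin n) :
    blockParity t i - blockParity t j = if ((i : ℕ) < t ↔ (j : ℕ) < t) then 0 else 1 := by
  unfold blockParity
  by_cases hi : (i : ℕ) < t <;> by_cases hj : (j : ℕ) < t <;> simp [hi, hj]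

theorem preadj_supermatrix_general {R : Type*} [Ring R] (R₀ R₁ : AddSubgroup R)
    (hdec : ∀ r : R, ∃ r0 ∈ R₀, ∃ r1 ∈ R₁, r = r0 + r1)
    (hint : R₀ ⊓ R₁ = ⊥)
    (h00 : ∀ a ∈ R₀, ∀ b ∈ R₀, a * b ∈ R₀)
    (h01 : ∀ a ∈ R₀, ∀ b ∈ R₁, a * b ∈ R₁)
    (h10 : ∀ a ∈ R₁, ∀ b ∈ R₀, a * b ∈ R₁)
    (h11 : ∀ a ∈ R₁, ∀ b ∈ R₁, a * b ∈ R₀)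
    {n t : ℕ}
    (A : Matrix (Fin n) (Fin n) R)
    (hA : ∀ i j : Fin n,
      (((i : ℕ) < t ↔ (j : ℕ) < t) → A i j ∈ R₀) ∧
      (¬((i : ℕ) < t ↔ (j : ℕ) < t) → A i j ∈ R₁)) :
    ∀ i j : Fin n,
      (((i : ℕ) < t ↔ (j : ℕ) < t) → preadj A i j ∈ R₀) ∧
      (¬((i : ℕ) < t ↔ (j : ℕ) < t) → preadj A i j ∈ R₁) := by
  have := evenOdd_gradedMonoid (one_mem_even hdec hint h00 h01 h11) h00 h01 h10 h11
  intro i j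
  rw [← mem_evenOdd_ite, ← blockParity_sub]
  refine preadj_mem_graded (evenOdd R₀ R₁) (blockParity t) A (fun i j => ?_) i j
  rw [blockParity_sub, mem_evenOdd_ite]
  exact hA i j

theorem preadj_supermatrix {R : Type*} [Ring R] (R₀ R₁ : AddSubgroup R)
    (hdec : ∀ r : R, ∃ r0 ∈ R₀, ∃ r1 ∈ R₁, r = r0 + r1)
    (hint : R₀ ⊓ R₁ = ⊥)
    (h00 : ∀ a ∈ R₀, ∀ b ∈ R₀, a * b ∈ R₀)
    (h01 : ∀ a ∈ R₀, ∀ b ∈ R₁, a * b ∈ R₁)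
    (h10 : ∀ a ∈ R₁, ∀ b ∈ R₀, a * b ∈ R₁)
    (h11 : ∀ a ∈ R₁, ∀ b ∈ R₁, a * b ∈ R₀)
    {n t : ℕ} (ht1 : 1 ≤ t) (ht2 : t ≤ n - 1)
    (A : Matrix (Fin n) (Fin n) R)
    (hA : ∀ i j : Fin n,
      (((i : ℕ) < t ↔ (j : ℕ) < t) → A i j ∈ R₀) ∧
      (¬((i : ℕ) < t ↔ (j : ℕ) < t) → A i j ∈ R₁)) :
    ∀ i j : Fin n,
      (((i : ℕ) < t ↔ (j : ℕ) < t) → preadj A i j ∈ R₀) ∧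
      (¬((i : ℕ) < t ↔ (j : ℕ) < t) → preadj A i j ∈ R₁) :=
  preadj_supermatrix_general R₀ R₁ hdec hint h00 h01 h10 h11 A hA
end

section
/- For a 2×2 matrix A = [[a,b],[c,d]] over an arbitrary ring R, the second right determinant minus the second left determinant equals the standard polynomial S₄ evaluated at the entries: rdet₍₂₎(A) − ldet₍₂₎(A) = S₄(a,b,c,d), where S₄(x₁,x₂,x₃,x₄) = Σ_{σ∈S₄} sgn(σ) x_{σ(1)}x_{σ(2)}x_{σ(3)}x_{σ(4)}. -/
open Matrix Polynomial

/-- The standard polynomial of degree four. -/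
def S4 {R : Type*} [Ring R] (x : Fin 4 → R) : R :=
  ∑ σ : Equiv.Perm (Fin 4),
    (Equiv.Perm.sign σ : ℤ) • (x (σ 0) * x (σ 1) * x (σ 2) * x (σ 3))

/-! For `n = 2` the preadjoint is the classical adjugate and
`sdet [[p, q], [r, s]] = ps - qr - rq + sp`, so both `rdet₍₂₎ A` and `ldet₍₂₎ A` are explicit
noncommutative polynomials of degree four in `a, b, c, d`. Expanding `S₄` along its first
variable, via the decomposition `Perm (Fin (n + 1)) ≃ Fin (n + 1) × Perm (Fin n)`, the identity
becomes one in the free ring. -/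

theorem Fintype.sum_perm_fin_succ {M : Type*} [AddCommMonoid M] {n : ℕ}
    (f : Equiv.Perm (Fin (n + 1)) → M) :
    ∑ σ, f σ =
      ∑ p : Fin (n + 1), ∑ e : Equiv.Perm (Fin n), f (Equiv.Perm.decomposeFin.symm (p, e)) := by
  rw [← Fintype.sum_prod_type', Equiv.sum_comp]

theorem Equiv.Perm.decomposeFin_symm_apply_two {n : ℕ} (e : Equiv.Perm (Fin (n + 2)))
    (p : Fin (n + 3)) :
    Equiv.Perm.decomposeFin.symm (p, e) 2 = Equiv.swap 0 p (e 1).succ := by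
  rw [← Fin.succ_one_eq_two, Equiv.Perm.decomposeFin_symm_apply_succ]

theorem Equiv.Perm.decomposeFin_symm_apply_three {n : ℕ} (e : Equiv.Perm (Fin (n + 3)))
    (p : Fin (n + 4)) :
    Equiv.Perm.decomposeFin.symm (p, e) 3 = Equiv.swap 0 p (e 2).succ := by
  rw [show (3 : Fin (n + 4)) = Fin.succ 2 from rfl, Equiv.Perm.decomposeFin_symm_apply_succ]

section

variable {R : Type*} [Ring R]

theorem sdet_fin_two (p q r s : R) :
    sdet !![p, q; r, s] = p * s - q * r - r * q + s * p := by
  simp only [sdet, of_apply, cons_val', cons_val_fin_one, List.ofFn_succ, Fin.isValue,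
    Fin.succ_zero_eq_one, List.ofFn_zero, List.prod_cons, List.prod_nil, mul_one, zsmul_eq_mul,
    Int.cast_mul, Fintype.sum_perm_fin_succ, Nat.reduceAdd, Finset.univ_unique,
    Equiv.Perm.default_eq, Nat.succ_eq_add_one, Equiv.Perm.decomposeFin.symm_sign, ite_mul, one_mul,
    neg_mul, Equiv.Perm.decomposeFin_symm_apply_zero, Equiv.Perm.decomposeFin_symm_apply_one,
    Equiv.swap_apply_def, Fin.succ_ne_zero, ↓reduceIte, Finset.sum_singleton, Equiv.Perm.sign_one,
    Equiv.Perm.coe_one, id_eq, Fin.sum_univ_succ, Units.val_one, Int.cast_one, cons_val_zero,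
    one_ne_zero, cons_val_one, Fin.default_eq_zero, Units.val_neg, Int.reduceNeg, Int.cast_neg,
    mul_neg, cons_val_succ, Finset.sum_neg_distrib, neg_neg]
  abel

theorem preadj_fin_two (a b c d : R) :
    preadj !![a, b; c, d] = !![d, -b; -c, a] := by
  ext r s
  fin_cases r <;> fin_cases s <;>
    simp [preadj, Finset.sum_filter, Fintype.sum_perm_fin_succ, Fin.sum_univ_succ,
      Equiv.swap_apply_def, List.finRange_succ]

theorem S4_eq_expand (x : Fin 4 → R) :
    S4 x =
      x 0 * (x 1 * x 2 * x 3 - x 1 * x 3 * x 2 - x 2 * x 1 * x 3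
          + x 2 * x 3 * x 1 + x 3 * x 1 * x 2 - x 3 * x 2 * x 1)
      - x 1 * (x 0 * x 2 * x 3 - x 0 * x 3 * x 2 - x 2 * x 0 * x 3
          + x 2 * x 3 * x 0 + x 3 * x 0 * x 2 - x 3 * x 2 * x 0)
      + x 2 * (x 0 * x 1 * x 3 - x 0 * x 3 * x 1 - x 1 * x 0 * x 3
          + x 1 * x 3 * x 0 + x 3 * x 0 * x 1 - x 3 * x 1 * x 0)
      - x 3 * (x 0 * x 1 * x 2 - x 0 * x 2 * x 1 - x 1 * x 0 * x 2
          + x 1 * x 2 * x 0 + x 2 * x 0 * x 1 - x 2 * x 1 * x 0) := by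
  simp only [S4, Fin.isValue, zsmul_eq_mul, Fintype.sum_perm_fin_succ, Nat.reduceAdd,
    Nat.succ_eq_add_one, Equiv.Perm.decomposeFin.symm_sign, ite_mul, one_mul, neg_mul,
    Equiv.Perm.decomposeFin_symm_apply_zero, Equiv.Perm.decomposeFin_symm_apply_one,
    Equiv.swap_apply_def, Fin.succ_ne_zero, ↓reduceIte, Equiv.Perm.decomposeFin_symm_apply_two,
    Equiv.Perm.decomposeFin_symm_apply_three, Finset.univ_unique, Equiv.Perm.default_eq,
    Finset.sum_singleton, Equiv.Perm.sign_one, Equiv.Perm.coe_one, id_eq, Fin.succ_zero_eq_one,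
    Fin.sum_univ_succ, one_ne_zero, Fin.succ_one_eq_two, Fin.default_eq_zero, neg_neg, Fin.reduceEq,
    Fin.reduceSucc, Units.val_one, Int.cast_one, Units.val_neg, Int.reduceNeg, Int.cast_neg]
  noncomm_ring

end

theorem rdet2_sub_ldet2_eq_S4 {R : Type*} [Ring R] (a b c d : R) :
    sdet ((!![a, b; c, d]) * preadj (!![a, b; c, d])) -
      sdet (preadj (!![a, b; c, d]) * (!![a, b; c, d])) =
    S4 ![a, b, c, d] := by
  rw [preadj_fin_two, mul_fin_two, mul_fin_two, sdet_fin_two, sdet_fin_two, S4_eq_expand]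
  simp only [cons_val]
  noncomm_ring
end

section
/- For a 3×3 matrix A over an arbitrary ring R, the symmetric Newton trace formula holds: sdet(A) = tr(A)³ − tr(A)·tr(A²) − tr(A·tr(A)·A) − tr(A²)·tr(A) + tr(A³) + tr((Aᵀ)³), where Aᵀ is the transpose of A. -/
open Matrix Polynomial

open Equiv Equiv.Perm

theorem Equiv.Perm.sum_univ_fin_three {M : Type*} [AddCommMonoid M] (f : Perm (Fin 3) → M) :
    ∑ σ, f σ = f 1 + f (swap 0 1) + f (swap 0 2) + f (swap 1 2) +
      f (swap 0 1 * swap 1 2) + f (swap 1 2 * swap 0 1) := by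
  have huniv : (Finset.univ : Finset (Perm (Fin 3))) =
      {1, swap 0 1, swap 0 2, swap 1 2, swap 0 1 * swap 1 2, swap 1 2 * swap 0 1} := by
    decide
  rw [huniv]
  repeat rw [Finset.sum_insert (by decide)]
  rw [Finset.sum_singleton]
  simp only [add_assoc]

theorem sdet_fin_three {R : Type*} [Ring R] (A : Matrix (Fin 3) (Fin 3) R) :
    sdet A = ∑ α : Perm (Fin 3), ∑ β : Perm (Fin 3), ((sign α : ℤ) * (sign β : ℤ)) •
      (A (α 0) (β 0) * A (α 1) (β 1) * A (α 2) (β 2)) := by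
  simp [sdet, List.ofFn_succ, mul_assoc]

theorem sdet3_newton {R : Type*} [Ring R] (A : Matrix (Fin 3) (Fin 3) R) :
    sdet A =
      Matrix.trace A ^ 3 - Matrix.trace A * Matrix.trace (A * A) -
        Matrix.trace (A * Matrix.scalar (Fin 3) (Matrix.trace A) * A) -
        Matrix.trace (A * A) * Matrix.trace A +
        Matrix.trace (A * A * A) + Matrix.trace (Aᵀ * Aᵀ * Aᵀ) := by
  rw [sdet_fin_three]
  simp only [sum_univ_fin_three, Perm.sign_mul, Perm.sign_one, sign_swap', Units.val_mul,
    Units.val_neg, Units.val_one, Perm.one_apply, Perm.mul_apply, swap_apply_left, swap_apply_right,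
    swap_apply_of_ne_of_ne, ne_eq, Fin.reduceEq, not_false_eq_true, if_false]
  simp only [Matrix.trace_fin_three, Matrix.mul_apply, Fin.sum_univ_three, Matrix.transpose_apply,
    Matrix.scalar_apply, Matrix.diagonal_apply_eq, Matrix.diagonal_apply_ne, ne_eq, Fin.reduceEq,
    not_false_eq_true]
  noncomm_ring
end

section
/- For any n and any A ∈ M_n(R) over an arbitrary ring R, tr((Aᵀ)²) = tr(A²), but for n = 2 there exists a ring R and A ∈ M₂(R) with tr((Aᵀ)³) ≠ tr(A³). -/
open Matrix Polynomial

/-- `R` contains a `2×2` matrix whose cubed transpose has a different trace from its cube. -/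
def HasTraceCubeTransposeCounterexample (R : Type) [Ring R] : Prop :=
  ∃ A : Matrix (Fin 2) (Fin 2) R, Matrix.trace (Aᵀ * Aᵀ * Aᵀ) ≠ Matrix.trace (A * A * A)

/-!
Transposition leaves `tr (A B)` unchanged because it only swaps the two summation indices of
`∑ i j, a_ij b_ji`. For cubes it instead reverses every cyclic word `a_ij a_jk a_ki`, which changes
the trace as soon as the entries fail to commute: with the matrix units `E₁₁, E₁₂, E₂₁` as entries,
`E₂₁ E₁₁ E₁₂ = E₂₂` while the reversed word `E₁₂ E₁₁ E₂₁` vanishes.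
-/

theorem Matrix.transpose_fin_two_of {α : Type*} (a b c d : α) :
    !![a, b; c, d]ᵀ = !![a, c; b, d] := by
  ext i j
  fin_cases i <;> fin_cases j <;> rfl

theorem Matrix.trace_cube_fin_two_of_zero {R : Type*} [Ring R] (x y z : R) :
    trace (!![x, y; z, 0] * !![x, y; z, 0] * !![x, y; z, 0]) =
      x * x * x + x * y * z + y * z * x + z * x * y := by
  rw [mul_fin_two, mul_fin_two, trace_fin_two_of]
  noncomm_ring

theorem hasTraceCubeTransposeCounterexample_matrix :
    HasTraceCubeTransposeCounterexample (Matrix (Fin 2) (Fin 2) ℤ) := by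
  refine ⟨!![single 0 0 1, single 0 1 1; single 1 0 1, 0], fun h => ?_⟩
  rw [transpose_fin_two_of, trace_cube_fin_two_of_zero, trace_cube_fin_two_of_zero] at h
  have h11 := congrFun (congrFun h 1) 1
  simp at h11

theorem trace_transpose_sq_eq_but_not_cube :
    (∀ (R : Type) (_ : Ring R) (n : ℕ) (A : Matrix (Fin n) (Fin n) R),
      Matrix.trace (Aᵀ * Aᵀ) = Matrix.trace (A * A)) ∧
    ∃ (R : Type) (inst : Ring R), @HasTraceCubeTransposeCounterexample R inst :=
  ⟨fun _ _ _ A => trace_transpose_mul A A,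
    ⟨_, _, hasTraceCubeTransposeCounterexample_matrix⟩⟩
end

section
/- For a 3×3 matrix A over an arbitrary ring R, the symmetric characteristic polynomial is sdet(zI − A) = 6z³ − 6·tr(A)·z² + 3·(tr(A)² − tr(A²))·z − sdet(A), as a polynomial in the central indeterminate z. -/
/-!
Expand each ordered product `∏ᵢ (z δ_{αi,βi} - a_{αi,βi})`, moving the central `z` to one side.
The `z³` term needs `α = β` (six pairs). A `z²` term needs `α = β` on two positions, hence
everywhere, and contributes `-Σ_k Σ_α a_{αk,αk} = -6 tr A`. A `z` term needs `α i = β i` for one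
`i`, so on the other two positions `j, k` either `β = α` or `β = α ∘ (j k)`; summing over `α` gives
`3 Σ_{p ≠ q} (a_pp a_qq - a_pq a_qp) = 3 (tr(A)² - tr(A²))`. The constant term is `-sdet A`.
-/

open Matrix Polynomial

theorem RingHom.map_sdet {R S : Type*} [Ring R] [Ring S] (f : R →+* S) {n : ℕ}
    (A : Matrix (Fin n) (Fin n) R) : f (sdet A) = sdet (A.map f) := by
  simp only [sdet, map_sum, map_zsmul, map_list_prod, List.map_ofFn]
  rfl

open Equiv in
theorem Equiv.Perm.sum_fin_three {M : Type*} [AddCommMonoid M] (f : Perm (Fin 3) → M) :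
    ∑ σ, f σ = f 1 + f (swap 0 1) + f (swap 0 2) + f (swap 1 2) +
      f (swap 0 1 * swap 1 2) + f (swap 0 2 * swap 1 2) := by
  have huniv : (Finset.univ : Finset (Perm (Fin 3))) =
      {1, swap 0 1, swap 0 2, swap 1 2, swap 0 1 * swap 1 2, swap 0 2 * swap 1 2} := by
    decide
  rw [huniv, Finset.sum_insert (by decide), Finset.sum_insert (by decide),
    Finset.sum_insert (by decide), Finset.sum_insert (by decide),
    Finset.sum_insert (by decide), Finset.sum_singleton]
  abel

theorem sdet_scalar_sub_fin_three {R : Type*} [Ring R] (x : R) (M : Matrix (Fin 3) (Fin 3) R)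
    (hx : ∀ i j, Commute x (M i j)) :
    sdet (scalar (Fin 3) x - M) =
      6 * x ^ 3 - 6 * trace M * x ^ 2 + 3 * (trace M ^ 2 - trace (M * M)) * x - sdet M := by
  have hx_mul : ∀ i j, x * M i j = M i j * x := fun i j => (hx i j).eq
  have hx_left_comm : ∀ i j (y : R), x * (M i j * y) = M i j * (x * y) := fun i j y =>
    (hx i j).left_comm y
  simp only [sdet, Equiv.Perm.sum_fin_three, List.ofFn_succ, List.ofFn_zero, List.prod_cons,
    List.prod_nil, Equiv.Perm.mul_apply, Equiv.swap_apply_def, Equiv.Perm.one_apply,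
    Equiv.Perm.sign_one, Equiv.Perm.sign_swap (by decide : (0 : Fin 3) ≠ 1),
    Equiv.Perm.sign_swap (by decide : (0 : Fin 3) ≠ 2),
    Equiv.Perm.sign_swap (by decide : (1 : Fin 3) ≠ 2), Equiv.Perm.sign_mul,
    Matrix.sub_apply, scalar_apply, diagonal_apply]
  norm_num [Fin.ext_iff]
  simp only [trace, diag, mul_apply, Fin.sum_univ_three,
    show (6 : R) = 1 + 1 + 1 + 1 + 1 + 1 by norm_num, show (3 : R) = 1 + 1 + 1 by norm_num,
    pow_succ, pow_zero, one_mul, mul_sub, sub_mul, mul_add, add_mul, mul_assoc, hx_mul, hx_left_comm]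
  abel

theorem sdet3_char_poly {R : Type*} [Ring R] (A : Matrix (Fin 3) (Fin 3) R) :
    sdet (Matrix.scalar (Fin 3) (Polynomial.X : Polynomial R) - A.map Polynomial.C) =
      6 * Polynomial.X ^ 3 - 6 * Polynomial.C (Matrix.trace A) * Polynomial.X ^ 2 +
        3 * Polynomial.C (Matrix.trace A ^ 2 - Matrix.trace (A * A)) * Polynomial.X -
        Polynomial.C (sdet A) := by
  rw [sdet_scalar_sub_fin_three X (A.map C) fun _ _ => commute_X _, C.map_sdet, map_sub,
    map_pow, AddMonoidHom.map_trace C, AddMonoidHom.map_trace C, Matrix.map_mul]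
end
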